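/- Let 0 < c < 1, 0 ≤ μ < 1, ν > 0, and let g_{μ,ν} be the inner product on 𝔤_c whose matrix in the basis e₀, e₁, e₂ is [[(cμ + c − 2)/(2(c−1)c²), (μ−1)/(2(c−1)c), 0], [(μ−1)/(2(c−1)c), (μ−1)/(2(c−1)), 0], [0, 0, ν]], with Levi-Civita product ∇. Then the symmetry subspace 𝔰 = {v ∈ 𝔤_c : ∇_u v = [u,v] for all u ∈ 𝔤_c} equals ℝ·e₂ if μ = 0, equals ℝ·(e₀ + (1/√c)·e₁) if μ = √c, and equals {0} if 0 < μ < 1 and μ ≠ √c. (Consequently the index of symmetry of (G_c, g_{μ,ν}) is 1 in the first two cases and 0 otherwise.) -/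

import Mathlib

/-!
By the Koszul formula and the nondegeneracy of `g_{μ,ν}` (its determinant is
`ν (μ² - 1) / (4 (c - 1) c²)`), `∇_u v = [u, v]` for all `u` iff
`g([u,v],Z) + g([v,Z],u) - g([Z,u],v) = 0` for all `u, Z`. For `𝔤_c` this trilinear expression
is alternating in `(u, Z)`, and its values on `(e₀,e₁), (e₀,e₂), (e₁,e₂)` are, up to nonzero
factors, the linear equations `μ v₂ = 0`, `(1-μ) v₀ + (c-μ) v₁ = 0`,
`(c-μ) v₀ + c(1-μ) v₁ = 0`. The last two have determinant `(1-c)(c-μ²)`, which vanishes exactly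
when `μ = √c`; solving the system in the three cases gives the symmetry subspace.
-/

noncomputable section

open scoped BigOperators

/-- The underlying space of the 3-dimensional Lie algebras under consideration. -/
abbrev V3 : Type := Fin 3 → ℝ

/-- The standard basis `e₀, e₁, e₂`. -/
def e3 (i : Fin 3) : V3 := Pi.single i 1

/-- The bracket of the Lie algebra `𝔤_c`:
`[e₀,e₁] = 0`, `[e₂,e₀] = e₁`, `[e₂,e₁] = −c e₀ + 2 e₁`, extended bilinearly. -/
def braC (c : ℝ) (x y : V3) : V3 :=
  ![-c * (x 2 * y 1 - y 2 * x 1),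
    (x 2 * y 0 - y 2 * x 0) + 2 * (x 2 * y 1 - y 2 * x 1),
    0]

/-- The matrix of the inner product `g_{μ,ν}` on `𝔤_c`, `0 < c < 1`, in the basis
`e₀,e₁,e₂`. -/
def Gm (c μ ν : ℝ) : Matrix (Fin 3) (Fin 3) ℝ :=
  !![(c*μ + c - 2)/(2*(c - 1)*c^2), (μ - 1)/(2*(c - 1)*c), 0;
     (μ - 1)/(2*(c - 1)*c), (μ - 1)/(2*(c - 1)), 0;
     0, 0, ν]

/-- The bilinear form associated with a matrix. -/
def gM (M : Matrix (Fin 3) (Fin 3) ℝ) (x y : V3) : ℝ :=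
  ∑ i : Fin 3, ∑ j : Fin 3, M i j * x i * y j

open Matrix

lemma gM_eq_dotProduct_mulVec (M : Matrix (Fin 3) (Fin 3) ℝ) (x y : V3) :
    gM M x y = x ⬝ᵥ M *ᵥ y := by
  simp only [gM, dotProduct, mulVec, Finset.mul_sum, mul_comm, mul_left_comm]

lemma eq_of_forall_gM_eq {M : Matrix (Fin 3) (Fin 3) ℝ} (hM : M.det ≠ 0) {x y : V3}
    (h : ∀ Z, gM M x Z = gM M y Z) : x = y := by
  refine sub_eq_zero.mp ((nondegenerate_of_det_ne_zero hM).eq_zero_of_ortho fun Z => ?_)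
  simpa [gM_eq_dotProduct_mulVec, sub_dotProduct, sub_eq_zero] using h Z

def symmetryDefect (M : Matrix (Fin 3) (Fin 3) ℝ) (br : V3 → V3 → V3) (v u Z : V3) : ℝ :=
  gM M (br u v) Z + gM M (br v Z) u - gM M (br Z u) v

lemma forall_nab_eq_iff_symmetryDefect {M : Matrix (Fin 3) (Fin 3) ℝ} (hM : M.det ≠ 0)
    (br nab : V3 → V3 → V3)
    (hK : ∀ X Y Z : V3, 2 * gM M (nab X Y) Z =
      gM M (br X Y) Z - gM M (br Y Z) X + gM M (br Z X) Y) (v : V3) :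
    (∀ u, nab u v = br u v) ↔ ∀ u Z, symmetryDefect M br v u Z = 0 := by
  unfold symmetryDefect
  refine ⟨fun h u Z => ?_, fun h u => eq_of_forall_gM_eq hM fun Z => ?_⟩
  · linarith [h u ▸ hK u v Z]
  · linarith [hK u v Z, h u Z]

lemma det_Gm (c μ ν : ℝ) (hc0 : c ≠ 0) (hc1 : c ≠ 1) :
    (Gm c μ ν).det = ν * (μ ^ 2 - 1) / (4 * (c - 1) * c ^ 2) := by
  have : c - 1 ≠ 0 := sub_ne_zero.mpr hc1
  rw [det_fin_three]
  simp only [Gm, of_apply, cons_val', cons_val_zero, cons_val_one, cons_val, cons_val_fin_one]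
  field_simp
  ring

lemma symmetryDefect_Gm_braC (c μ ν : ℝ) (hc0 : c ≠ 0) (hc1 : c ≠ 1) (v u Z : V3) :
    symmetryDefect (Gm c μ ν) (braC c) v u Z =
      -(u 0 * Z 1 - u 1 * Z 0) / c * (μ * v 2)
        + (u 0 * Z 2 - u 2 * Z 0) / ((c - 1) * c) * ((1 - μ) * v 0 + (c - μ) * v 1)
        + (u 1 * Z 2 - u 2 * Z 1) / ((c - 1) * c) * ((c - μ) * v 0 + c * (1 - μ) * v 1) := by
  have : c - 1 ≠ 0 := sub_ne_zero.mpr hc1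
  simp only [symmetryDefect, gM, Gm, braC, Fin.sum_univ_three, of_apply, cons_val', cons_val_zero,
    cons_val_one, cons_val, cons_val_fin_one]
  field_simp
  ring

def SymmetryEquations (c μ : ℝ) (v : V3) : Prop :=
  μ * v 2 = 0 ∧ (1 - μ) * v 0 + (c - μ) * v 1 = 0 ∧ (c - μ) * v 0 + c * (1 - μ) * v 1 = 0

lemma forall_symmetryDefect_eq_zero_iff (c μ ν : ℝ) (hc0 : c ≠ 0) (hc1 : c ≠ 1) (v : V3) :
    (∀ u Z, symmetryDefect (Gm c μ ν) (braC c) v u Z = 0) ↔ SymmetryEquations c μ v := by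
  have hc1' : c - 1 ≠ 0 := sub_ne_zero.mpr hc1
  simp only [symmetryDefect_Gm_braC c μ ν hc0 hc1]
  refine ⟨fun h => ⟨?_, ?_, ?_⟩, fun ⟨h₁, h₂, h₃⟩ u Z => by rw [h₁, h₂, h₃]; ring⟩
  · simpa [e3, hc0] using h (e3 0) (e3 1)
  · simpa [e3, hc0, hc1'] using h (e3 0) (e3 2)
  · simpa [e3, hc0, hc1'] using h (e3 1) (e3 2)

lemma forall_nab_eq_braC_iff {c μ ν : ℝ} (hc0 : c ≠ 0) (hc1 : c ≠ 1) (hμ : μ ^ 2 ≠ 1)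
    (hν : ν ≠ 0) (nab : V3 → V3 → V3)
    (hK : ∀ X Y Z : V3, 2 * gM (Gm c μ ν) (nab X Y) Z =
      gM (Gm c μ ν) (braC c X Y) Z - gM (Gm c μ ν) (braC c Y Z) X
        + gM (Gm c μ ν) (braC c Z X) Y) (v : V3) :
    (∀ u, nab u v = braC c u v) ↔ SymmetryEquations c μ v := by
  have hdet : (Gm c μ ν).det ≠ 0 := by
    rw [det_Gm c μ ν hc0 hc1]
    have : c - 1 ≠ 0 := sub_ne_zero.mpr hc1
    have : μ ^ 2 - 1 ≠ 0 := sub_ne_zero.mpr hμ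
    positivity
  rw [forall_nab_eq_iff_symmetryDefect hdet _ nab hK,
    forall_symmetryDefect_eq_zero_iff c μ ν hc0 hc1]

lemma symmetryEquations_zero_iff {c : ℝ} (hc0 : c ≠ 0) (hc1 : c ≠ 1) (v : V3) :
    SymmetryEquations c 0 v ↔ ∃ t : ℝ, v = t • e3 2 := by
  constructor
  · rintro ⟨-, h₂, h₃⟩
    have hv0 : v 0 = 0 := by
      have : (1 - c) * v 0 = 0 := by linear_combination h₂ - h₃
      simpa [sub_eq_zero, Ne.symm hc1] using this
    have hv1 : v 1 = 0 := by simpa [hv0, hc0] using h₂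
    refine ⟨v 2, funext fun i => ?_⟩
    fin_cases i <;> simp [e3, hv0, hv1]
  · rintro ⟨t, rfl⟩
    simp [SymmetryEquations, e3]

lemma symmetryEquations_sqrt_iff {c : ℝ} (hc0 : 0 < c) (hc1 : c ≠ 1) (v : V3) :
    SymmetryEquations c √c v ↔ ∃ t : ℝ, v = t • (e3 0 + (1 / √c) • e3 1) := by
  have hs0 : √c ≠ 0 := by positivity
  have hs1 : 1 - √c ≠ 0 := by
    rw [sub_ne_zero, ne_comm, Ne, Real.sqrt_eq_one]; exact hc1
  have hsq : √c ^ 2 = c := Real.sq_sqrt hc0.le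
  constructor
  · rintro ⟨h₁, h₂, -⟩
    have hv2 : v 2 = 0 := by simpa [hs0] using h₁
    have hv1 : v 1 = v 0 / √c := by
      have : (1 - √c) * (v 0 - √c * v 1) = 0 := by linear_combination h₂ + v 1 * hsq
      rw [eq_div_iff hs0, mul_comm, eq_comm]
      simpa [hs1, sub_eq_zero] using this
    refine ⟨v 0, funext fun i => ?_⟩
    fin_cases i <;> simp [e3, hv1, hv2, div_eq_mul_inv]
  · rintro ⟨t, rfl⟩
    refine ⟨by simp [e3], ?_, ?_⟩ <;> simp [e3] <;> field_simp <;> linear_combination (-t) * hsq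

lemma symmetryEquations_iff_eq_zero {c μ : ℝ} (hc0 : c ≠ 0) (hc1 : c ≠ 1) (hμ0 : μ ≠ 0)
    (hμ1 : μ ≠ 1) (hμc : μ ^ 2 ≠ c) (v : V3) : SymmetryEquations c μ v ↔ v = 0 := by
  constructor
  · rintro ⟨h₁, h₂, h₃⟩
    have hv2 : v 2 = 0 := by simpa [hμ0] using h₁
    have hv0 : v 0 = 0 := by
      have : (1 - c) * (c - μ ^ 2) * v 0 = 0 := by
        linear_combination c * (1 - μ) * h₂ - (c - μ) * h₃
      simpa [sub_eq_zero, Ne.symm hc1, Ne.symm hμc] using this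
    have hv1 : v 1 = 0 := by simpa [hv0, hc0, sub_eq_zero, Ne.symm hμ1] using h₃
    funext i
    fin_cases i <;> simp [hv0, hv1, hv2]
  · rintro rfl
    simp [SymmetryEquations]

/-- for `0 < c < 1`, the symmetry subspace
`𝔰 = {v : ∇_u v = [u,v] for all u}` of `(𝔤_c, g_{μ,ν})` is `ℝ e₂` when `μ = 0`,
`ℝ (e₀ + (1/√c) e₁)` when `μ = √c`, and `{0}` when `0 < μ < 1`, `μ ≠ √c`. -/
theorem stmt16 (c μ ν : ℝ) (hc0 : 0 < c) (hc1 : c < 1) (hμ0 : 0 ≤ μ) (hμ1 : μ < 1)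
    (hν : 0 < ν) (nab : V3 → V3 → V3)
    (hK : ∀ X Y Z : V3, 2 * gM (Gm c μ ν) (nab X Y) Z =
      gM (Gm c μ ν) (braC c X Y) Z - gM (Gm c μ ν) (braC c Y Z) X
        + gM (Gm c μ ν) (braC c Z X) Y) :
    (μ = 0 → ∀ v : V3,
      (∀ u : V3, nab u v = braC c u v) ↔ ∃ t : ℝ, v = t • e3 2) ∧
    (μ = Real.sqrt c → ∀ v : V3,
      (∀ u : V3, nab u v = braC c u v) ↔
        ∃ t : ℝ, v = t • (e3 0 + (1/Real.sqrt c) • e3 1)) ∧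
    (0 < μ → μ ≠ Real.sqrt c → ∀ v : V3,
      (∀ u : V3, nab u v = braC c u v) ↔ v = 0) := by
  have hc1' : c ≠ 1 := hc1.ne
  have hμsq : μ ^ 2 ≠ 1 := by nlinarith
  have hsym := forall_nab_eq_braC_iff hc0.ne' hc1' hμsq hν.ne' nab hK
  refine ⟨?_, ?_, fun hμpos hμc v => ?_⟩
  · rintro rfl v
    rw [hsym, symmetryEquations_zero_iff hc0.ne' hc1']
  · rintro rfl v
    rw [hsym, symmetryEquations_sqrt_iff hc0 hc1']
  · have hμc' : μ ^ 2 ≠ c := fun h => hμc (by rw [← h, Real.sqrt_sq hμ0])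
    rw [hsym, symmetryEquations_iff_eq_zero hc0.ne' hc1' hμpos.ne' hμ1.ne hμc']
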